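/- arXiv:1808.06035 — 6 statements merged into one kernel-verified Lean document; each statement's English description precedes it below -/
import Mathlib

section
/- Suppose a tuple (g₁, g₂, h₁, h₂, k₁, k₂) of polynomials in ℂ[λ,∂] satisfies the system S(a,b,c). Then the pair (g₂, h₂) is one of the following three: (A) g₂(λ,∂) = ∂ + aλ + b and h₂(λ,∂) = 0; (B) g₂(λ,∂) = ∂ + aλ + b + c and h₂(λ,∂) = c, with c ≠ 0; (C) g₂(λ,∂) = ∂ + (a−1)λ + b + c and h₂(λ,∂) = ∂ + λ + c. -/
open MvPolynomial

noncomputable section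

/-- Polynomials in `ℂ[λ, ∂]`: variable `0` is `λ`, variable `1` is `∂`. -/
abbrev P2 : Type := MvPolynomial (Fin 2) ℂ

/-- Polynomials in `ℂ[λ, μ, ∂]`: variable `0` is `λ`, variable `1` is `μ`, variable `2` is `∂`. -/
abbrev P3 : Type := MvPolynomial (Fin 3) ℂ

/-- Substitution: `sb p u v` is `p(u, v)`, the image of `p` under `λ ↦ u`, `∂ ↦ v`. -/
def sb {n : ℕ} (p : P2) (u v : MvPolynomial (Fin n) ℂ) : MvPolynomial (Fin n) ℂ :=
  aeval ![u, v] p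

/-- `λ` in `ℂ[λ,μ,∂]`. -/
def lm : P3 := X 0
/-- `μ` in `ℂ[λ,μ,∂]`. -/
def mu : P3 := X 1
/-- `∂` in `ℂ[λ,μ,∂]`. -/
def pa : P3 := X 2
/-- `λ` in `ℂ[λ,∂]`. -/
def lm' : P2 := X 0
/-- `∂` in `ℂ[λ,∂]`. -/
def pa' : P2 := X 1


lemma aeval_pair {S T : Type*} [CommSemiring S] [Algebra ℂ S] [CommSemiring T] [Algebra ℂ T]
    (F : S →ₐ[ℂ] T) (p : P2) (u v : S) :
    F (aeval ![u, v] p) = aeval ![F u, F v] p := by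
  have h : (fun i => F (![u, v] i)) = ![F u, F v] := by
    funext i; fin_cases i <;> rfl
  rw [comp_aeval_apply, h]

abbrev PP : Type := Polynomial P2

/-- `P2 → ℂ[x][T]`, `λ ↦ C x`, `∂ ↦ T`. -/
def toQ : P2 →ₐ[ℂ] Polynomial (Polynomial ℂ) :=
  aeval ![Polynomial.C Polynomial.X, Polynomial.X]

/-- inverse direction -/
def bk : Polynomial (Polynomial ℂ) →ₐ[ℂ] P2 :=
  Polynomial.aevalTower (Polynomial.aeval lm') pa'

lemma bk_toQ (p : P2) : bk (toQ p) = p := by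
  have : bk.comp toQ = AlgHom.id ℂ P2 := by
    apply MvPolynomial.algHom_ext
    intro i
    fin_cases i <;>
      simp [toQ, bk, lm', pa']
  exact AlgHom.congr_fun this p

/-- substitute `λ := r` (a polynomial in `P2`), `∂ := T`. -/
def gg (G : P2) (r : P2) : PP := aeval ![Polynomial.C r, Polynomial.X] G

lemma gg_eq_map (G : P2) (r : P2) :
    gg G r = (toQ G).map ↑(Polynomial.aeval r : Polynomial ℂ →ₐ[ℂ] P2) := by
  have := aeval_pair (Polynomial.mapAlgHom (Polynomial.aeval r : Polynomial ℂ →ₐ[ℂ] P2))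
      G (Polynomial.C Polynomial.X) Polynomial.X
  simp only [Polynomial.coe_mapAlgHom, Polynomial.map_C, Polynomial.map_X,
    Polynomial.aeval_X, RingHom.coe_coe] at this
  simp only [gg, toQ]
  exact this.symm

lemma gg_coeff (G : P2) (r : P2) (k : ℕ) :
    (gg G r).coeff k = Polynomial.aeval r ((toQ G).coeff k) := by
  rw [gg_eq_map, Polynomial.coeff_map]; rfl

lemma gg_natDegree (G : P2) (r : P2) : (gg G r).natDegree ≤ (toQ G).natDegree := by
  rw [gg_eq_map]; exact Polynomial.natDegree_map_le

lemma gg_comp (G : P2) (r w : P2) :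
    aeval ![Polynomial.C r, Polynomial.X + Polynomial.C w] G
      = (gg G r).comp (Polynomial.X + Polynomial.C w) := by
  rw [Polynomial.comp_eq_aeval]
  have := aeval_pair ((Polynomial.aeval (Polynomial.X + Polynomial.C w) :
      PP →ₐ[P2] PP).restrictScalars ℂ) G (Polynomial.C r) Polynomial.X
  simp only [AlgHom.coe_restrictScalars', Polynomial.aeval_C, Polynomial.aeval_X] at this
  simp only [gg]
  rw [show (Polynomial.C r : PP) = algebraMap P2 PP r from rfl]
  exact this.symm



lemma coeff_mul_special {S : Type*} [CommSemiring S] (p q : Polynomial S) (d : ℕ)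
    (hd : 1 ≤ d) (hp : p.natDegree ≤ d) (hq : q.natDegree ≤ d) :
    (p * q).coeff (2 * d - 1) =
      p.coeff d * q.coeff (d - 1) + p.coeff (d - 1) * q.coeff d := by
  rw [Polynomial.coeff_mul]
  have hsub : ({(d, d - 1), (d - 1, d)} : Finset (ℕ × ℕ)) ⊆ Finset.HasAntidiagonal.antidiagonal (2 * d - 1) := by
    intro x hx
    simp only [Finset.mem_insert, Finset.mem_singleton] at hx
    rcases hx with h | h <;> subst h <;>
      exact Finset.HasAntidiagonal.mem_antidiagonal.mpr (show _ + _ = 2 * d - 1 by omega)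
  rw [← Finset.sum_subset hsub]
  · rw [Finset.sum_pair (by intro hc; rw [Prod.ext_iff] at hc; omega)]
  · intro x hx hnx
    simp only [Finset.HasAntidiagonal.mem_antidiagonal] at hx
    simp only [Finset.mem_insert, Finset.mem_singleton] at hnx
    have : d < x.1 ∨ d < x.2 := by
      rcases x with ⟨i, j⟩
      simp only [Prod.mk.injEq, not_or, not_and_or] at hnx
      simp only at hx ⊢
      omega
    rcases this with h | h
    · rw [Polynomial.coeff_eq_zero_of_natDegree_lt (lt_of_le_of_lt hp h), zero_mul]
    · rw [Polynomial.coeff_eq_zero_of_natDegree_lt (lt_of_le_of_lt hq h), mul_zero]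

lemma coeff_comp_top {S : Type*} [CommRing S] (p : Polynomial S) (d : ℕ)
    (hp : p.natDegree ≤ d) (w : S) :
    (p.comp (Polynomial.X + Polynomial.C w)).coeff d = p.coeff d := by
  rw [← Polynomial.taylor_apply, Polynomial.taylor_coeff]
  have : Polynomial.hasseDeriv d p = Polynomial.C (p.coeff d) := by
    ext n
    rw [Polynomial.hasseDeriv_coeff]
    cases n with
    | zero => simp
    | succ m =>
      rw [Polynomial.coeff_eq_zero_of_natDegree_lt (by omega), Polynomial.coeff_C]
      simp
  rw [this, Polynomial.eval_C]

lemma coeff_comp_sub_one {S : Type*} [CommRing S] (p : Polynomial S) (d : ℕ)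
    (hd : 1 ≤ d) (hp : p.natDegree ≤ d) (w : S) :
    (p.comp (Polynomial.X + Polynomial.C w)).coeff (d - 1)
      = p.coeff (d - 1) + (d : S) * w * p.coeff d := by
  rw [← Polynomial.taylor_apply, Polynomial.taylor_coeff]
  have : Polynomial.hasseDeriv (d - 1) p
      = Polynomial.C (p.coeff (d - 1)) + Polynomial.C ((d : S) * p.coeff d) * Polynomial.X := by
    ext n
    rw [Polynomial.hasseDeriv_coeff]
    match n with
    | 0 => simp
    | 1 =>
      have h1 : 1 + (d - 1) = d := by omega
      have h2 : d.choose (d - 1) = d := by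
        rw [Nat.choose_symm hd, Nat.choose_one_right]
      simp [h1, h2, Polynomial.coeff_C]
    | (m + 2) =>
      rw [Polynomial.coeff_eq_zero_of_natDegree_lt (by omega)]
      simp [Polynomial.coeff_C, Polynomial.coeff_X]
  rw [this]
  simp
  ring

lemma X01_ne : (X 0 : P2) - X 1 ≠ 0 := by
  intro h
  have := congrArg (eval ![(1 : ℂ), 0]) h
  simp at this

lemma X01_add_ne : (X 0 : P2) + X 1 ≠ 0 := by
  intro h
  have := congrArg (eval ![(1 : ℂ), 0]) h
  simp at this

lemma two_ne : (2 : P2) ≠ 0 := by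
  intro h
  have := congrArg (eval ![(1 : ℂ), 0]) h
  simp at this

-- injectivity of plugging a "coordinate-like" element into a 1-var polynomial
lemma aeval_inj_of_retract (u : P2) (ρ : P2 →ₐ[ℂ] Polynomial ℂ) (hu : ρ u = Polynomial.X)
    (A : Polynomial ℂ) (h : Polynomial.aeval u A = 0) : A = 0 := by
  have := congrArg ρ h
  rw [← Polynomial.aeval_algHom_apply, hu, Polynomial.aeval_X_left_apply, map_zero] at this
  exact this

lemma coeff_comp_C_mul_X {S : Type*} [CommSemiring S] (p : Polynomial S) (k : S) (n : ℕ) :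
    (p.comp (Polynomial.C k * Polynomial.X)).coeff n = k ^ n * p.coeff n := by
  induction p using Polynomial.induction_on' with
  | add f g hf hg => simp [hf, hg, mul_add]
  | monomial m a =>
    rw [Polynomial.monomial_comp, mul_pow, ← Polynomial.C_pow, ← mul_assoc, ← Polynomial.C_mul,
      Polynomial.coeff_C_mul, Polynomial.coeff_X_pow, Polynomial.coeff_monomial]
    by_cases h : n = m
    · subst h; simp; ring
    · simp [h, Ne.symm h]


lemma gsub_eq_map (G r : P2) :
    aeval ![Polynomial.C r, Polynomial.X] G
      = (toQ G).map ↑(Polynomial.aeval r : Polynomial ℂ →ₐ[ℂ] P2) := by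
  rw [show (aeval ![Polynomial.C r, Polynomial.X]) G = gg G r from rfl, gg_eq_map]

lemma gsub_coeff (G r : P2) (k : ℕ) :
    (aeval ![Polynomial.C r, Polynomial.X] G).coeff k
      = Polynomial.aeval r ((toQ G).coeff k) := gg_coeff G r k

lemma gsub_natDegree (G r : P2) :
    (aeval ![Polynomial.C r, Polynomial.X] G).natDegree ≤ (toQ G).natDegree :=
  gg_natDegree G r

lemma gsub_comp (G r w : P2) :
    aeval ![Polynomial.C r, Polynomial.X + Polynomial.C w] G
      = (aeval ![Polynomial.C r, Polynomial.X] G).comp (Polynomial.X + Polynomial.C w) :=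
  gg_comp G r w

lemma g2_structure (G : P2) (hG : G ≠ 0)
    (hE4 : (lm - mu) * sb G (lm + mu) pa =
      sb G mu (lm + pa) * sb G lm pa - sb G lm (mu + pa) * sb G mu pa) :
    ∃ α e : ℂ, G = pa' + C α * lm' + C e := by
  have hQne : toQ G ≠ 0 := by
    intro h
    apply hG
    have h2 := bk_toQ G
    rw [h, map_zero] at h2
    exact h2.symm
  -- transport E4 to (P2)[T]
  have h4 := congrArg (fun p : P3 =>
    (aeval ![Polynomial.C (X 0 : P2), Polynomial.C (X 1 : P2), (Polynomial.X : PP)] :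
      P3 →ₐ[ℂ] PP) p) hE4
  simp only [sb, map_mul, map_sub, map_add, aeval_pair, aeval_X,
    Matrix.cons_val_zero, Matrix.cons_val_one, Matrix.head_cons, Matrix.cons_val_two,
    Matrix.tail_cons, lm, mu, pa] at h4
  rw [show (Polynomial.C (X 0 : P2) + Polynomial.C (X 1 : P2))
        = Polynomial.C ((X 0 : P2) + X 1) from (map_add _ _ _).symm] at h4
  rw [show (Polynomial.C (X 0 : P2) + (Polynomial.X : PP))
        = Polynomial.X + Polynomial.C (X 0 : P2) from add_comm _ _] at h4
  rw [show (Polynomial.C (X 1 : P2) + (Polynomial.X : PP))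
        = Polynomial.X + Polynomial.C (X 1 : P2) from add_comm _ _] at h4
  rw [gsub_comp, gsub_comp] at h4
  -- h4 : (C x - C y) * g(x+y) = g(y).comp (X + C x) * g(x) - g(x).comp (X + C y) * g(y)
  set x : P2 := X 0 with hxdef
  set y : P2 := X 1 with hydef
  -- Step 1 : natDegree (toQ G) ≤ 1
  have hd : (toQ G).natDegree ≤ 1 := by
    by_contra hd'
    push_neg at hd'
    set d := (toQ G).natDegree with hddef
    have hd2 : 2 ≤ d := hd'
    have hgx : (aeval ![Polynomial.C x, Polynomial.X] G).natDegree ≤ d := gsub_natDegree G x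
    have hgy : (aeval ![Polynomial.C y, Polynomial.X] G).natDegree ≤ d := gsub_natDegree G y
    have hcx : ((aeval ![Polynomial.C y, Polynomial.X] G).comp
        (Polynomial.X + Polynomial.C x)).natDegree ≤ d := by
      refine le_trans Polynomial.natDegree_comp_le ?_
      rw [Polynomial.natDegree_X_add_C, mul_one]
      exact hgy
    have hcy : ((aeval ![Polynomial.C x, Polynomial.X] G).comp
        (Polynomial.X + Polynomial.C y)).natDegree ≤ d := by
      refine le_trans Polynomial.natDegree_comp_le ?_
      rw [Polynomial.natDegree_X_add_C, mul_one]
      exact hgx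
    have h1 := congrArg (fun p : PP => p.coeff (2 * d - 1)) h4
    rw [show (Polynomial.C x - Polynomial.C y) = Polynomial.C (x - y) from (map_sub _ _ _).symm,
      Polynomial.coeff_C_mul,
      Polynomial.coeff_eq_zero_of_natDegree_lt
        (lt_of_le_of_lt (gsub_natDegree G (x + y)) (by omega)),
      mul_zero, Polynomial.coeff_sub,
      coeff_mul_special _ _ d (by omega) hcx hgx,
      coeff_mul_special _ _ d (by omega) hcy hgy,
      coeff_comp_top _ d hgy, coeff_comp_top _ d hgx,
      coeff_comp_sub_one _ d (by omega) hgy, coeff_comp_sub_one _ d (by omega) hgx,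
      gsub_coeff, gsub_coeff, gsub_coeff, gsub_coeff] at h1
    have key : (d : P2) * ((x - y) *
        (Polynomial.aeval x ((toQ G).coeff d) * Polynomial.aeval y ((toQ G).coeff d))) = 0 := by
      linear_combination -h1
    have hdne : (d : P2) ≠ 0 := by
      rw [show ((d : ℕ) : P2) = MvPolynomial.C ((d : ℕ) : ℂ) from (map_natCast _ _).symm]
      rw [Ne, MvPolynomial.C_eq_zero]
      exact_mod_cast (by omega : ¬ (d = 0))
    have hxyne : x - y ≠ 0 := X01_ne
    have hprod := (mul_eq_zero.mp key).resolve_left hdne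
    have hprod2 := (mul_eq_zero.mp hprod).resolve_left hxyne
    have hAd : (toQ G).coeff d = 0 := by
      rcases mul_eq_zero.mp hprod2 with h | h
      · exact aeval_inj_of_retract x (aeval ![Polynomial.X, 0]) (by simp [hxdef]) _ h
      · exact aeval_inj_of_retract y (aeval ![0, Polynomial.X]) (by simp [hydef]) _ h
    exact hQne (Polynomial.leadingCoeff_eq_zero.mp hAd)
  -- Step 2 : decompose
  set A1 : Polynomial ℂ := (toQ G).coeff 1 with hA1def
  set A0 : Polynomial ℂ := (toQ G).coeff 0 with hA0def
  have hQ : toQ G = Polynomial.C A1 * Polynomial.X + Polynomial.C A0 :=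
    Polynomial.eq_X_add_C_of_natDegree_le_one hd
  have hgr : ∀ r : P2, aeval ![Polynomial.C r, Polynomial.X] G
      = Polynomial.C (Polynomial.aeval r A1) * Polynomial.X
        + Polynomial.C (Polynomial.aeval r A0) := by
    intro r
    rw [gsub_eq_map, hQ]
    simp [Polynomial.map_add, Polynomial.map_mul, Polynomial.map_C, Polynomial.map_X]
  simp only [hgr] at h4
  -- Step 3 : evaluate at T = 0, 1, 2
  have hv0 := congrArg (fun p : PP => Polynomial.eval (0 : P2) p) h4
  have hv1 := congrArg (fun p : PP => Polynomial.eval (1 : P2) p) h4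
  have hv2 := congrArg (fun p : PP => Polynomial.eval (2 : P2) p) h4
  simp only [Polynomial.eval_mul, Polynomial.eval_sub, Polynomial.eval_add,
    Polynomial.eval_comp, Polynomial.eval_C, Polynomial.eval_X] at hv0 hv1 hv2
  have eq0 : (x - y) * Polynomial.aeval (x + y) A0
      = x * (Polynomial.aeval y A1 * Polynomial.aeval x A0)
        - y * (Polynomial.aeval x A1 * Polynomial.aeval y A0) := by
    linear_combination hv0
  have eq1 : Polynomial.aeval (x + y) A1 = Polynomial.aeval x A1 * Polynomial.aeval y A1 := by
    have h2 : (2 : P2) * ((x - y) * Polynomial.aeval (x + y) A1)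
        = (2 : P2) * ((x - y) * (Polynomial.aeval x A1 * Polynomial.aeval y A1)) := by
      linear_combination 4 * hv1 - hv2 - 3 * hv0
    exact mul_left_cancel₀ X01_ne (mul_left_cancel₀ two_ne h2)
  -- Step 4 : A1 = 1
  have hA1ne : A1 ≠ 0 := by
    intro hA1
    rw [hA1] at eq0
    simp only [map_zero, mul_zero, zero_mul, sub_zero, zero_sub, mul_comm] at eq0
    have h0 : Polynomial.aeval (x + y) A0 = 0 := by
      rcases mul_eq_zero.mp (show (x - y) * Polynomial.aeval (x + y) A0 = 0 by
        linear_combination eq0) with h | h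
      · exact absurd h X01_ne
      · exact h
    have hA0 : A0 = 0 :=
      aeval_inj_of_retract (x + y) (aeval ![Polynomial.X, 0]) (by simp [hxdef, hydef]) _ h0
    apply hQne
    rw [hQ, hA1, hA0]
    simp
  have hmul : A1.comp (Polynomial.X + Polynomial.X) = A1 * A1 := by
    have e := congrArg (fun p : P2 => (aeval ![(Polynomial.X : Polynomial ℂ),
        (Polynomial.X : Polynomial ℂ)] : P2 →ₐ[ℂ] Polynomial ℂ) p) eq1
    simp only [map_mul, map_add] at e
    rw [← Polynomial.aeval_algHom_apply, ← Polynomial.aeval_algHom_apply,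
      ← Polynomial.aeval_algHom_apply] at e
    simp only [map_add, aeval_X, Matrix.cons_val_zero, Matrix.cons_val_one, Matrix.head_cons,
      hxdef, hydef, Polynomial.aeval_X_left_apply] at e
    rw [Polynomial.comp_eq_aeval]
    exact e
  have hXXdeg : (Polynomial.X + Polynomial.X : Polynomial ℂ).natDegree = 1 := by
    rw [show (Polynomial.X + Polynomial.X : Polynomial ℂ) = Polynomial.C 2 * Polynomial.X from by
      rw [map_ofNat, two_mul], Polynomial.natDegree_C_mul (by norm_num), Polynomial.natDegree_X]
  have hA1deg : A1.natDegree = 0 := by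
    have hdc : (A1.comp (Polynomial.X + Polynomial.X)).natDegree = A1.natDegree := by
      rw [Polynomial.natDegree_comp, hXXdeg, mul_one]
    have hmm : (A1 * A1).natDegree = A1.natDegree + A1.natDegree :=
      Polynomial.natDegree_mul hA1ne hA1ne
    rw [hmul, hmm] at hdc
    omega
  have hA1C : A1 = 1 := by
    have hk := Polynomial.eq_C_of_natDegree_eq_zero hA1deg
    set k : ℂ := A1.coeff 0 with hkdef
    rw [hk] at hmul
    simp only [Polynomial.C_comp, ← Polynomial.C_mul] at hmul
    have hkk : k = k * k := by
      rwa [Polynomial.C_inj] at hmul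
    have hkne : k ≠ 0 := by
      intro h
      apply hA1ne
      rw [hk, h, map_zero]
    have hk1 : k = 1 := by
      rcases mul_eq_zero.mp (show k * (k - 1) = 0 by linear_combination -hkk) with h | h
      · exact absurd h hkne
      · exact sub_eq_zero.mp h
    rw [hk, hk1, map_one]
  -- Step 5 : A0 is affine
  rw [hA1C] at eq0
  simp only [map_one, one_mul, mul_one] at eq0
  have J : ∀ u v : P2, (u - v) * Polynomial.aeval (u + v) A0
      = u * Polynomial.aeval u A0 - v * Polynomial.aeval v A0 := by
    intro u v
    have e := congrArg (fun p : P2 => (aeval ![u, v] : P2 →ₐ[ℂ] P2) p) eq0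
    simp only [map_mul, map_sub, map_add] at e
    rw [← Polynomial.aeval_algHom_apply, ← Polynomial.aeval_algHom_apply,
      ← Polynomial.aeval_algHom_apply] at e
    simp only [map_add, map_sub, aeval_X, Matrix.cons_val_zero, Matrix.cons_val_one,
      Matrix.head_cons, hxdef, hydef] at e
    exact e
  have j1 := J (x + y) (-y)
  rw [show x + y + -y = x by ring] at j1
  have j2 := J x (-y)
  have jen : (x + y) * (Polynomial.aeval (x + y) A0 + Polynomial.aeval (x + -y) A0)
      = (x + y) * (2 * Polynomial.aeval x A0) := by
    linear_combination j2 - j1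
  have jen2 : Polynomial.aeval (x + y) A0 + Polynomial.aeval (x + -y) A0
      = 2 * Polynomial.aeval x A0 := mul_left_cancel₀ X01_add_ne jen
  set e0 : ℂ := A0.coeff 0 with he0def
  have hcomp2 : A0.comp (Polynomial.X + Polynomial.X) + Polynomial.C e0 = 2 * A0 := by
    have e := congrArg (fun p : P2 => (aeval ![(X 0 : P2), (X 0 : P2)] : P2 →ₐ[ℂ] P2) p) jen2
    simp only [map_mul, map_add] at e
    rw [← Polynomial.aeval_algHom_apply, ← Polynomial.aeval_algHom_apply,
      ← Polynomial.aeval_algHom_apply] at e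
    simp only [map_add, map_neg, map_ofNat, aeval_X, Matrix.cons_val_zero, Matrix.cons_val_one,
      Matrix.head_cons, hxdef, hydef, add_neg_cancel] at e
    have hz : Polynomial.aeval (0 : P2) A0 = MvPolynomial.C e0 := by
      rw [Polynomial.aeval_def, Polynomial.eval₂_at_zero]
      rfl
    rw [hz] at e
    -- now push to one-variable world
    have e2 := congrArg (fun p : P2 => (aeval ![(Polynomial.X : Polynomial ℂ), 0] :
        P2 →ₐ[ℂ] Polynomial ℂ) p) e
    simp only [map_mul, map_add, map_ofNat] at e2
    rw [← Polynomial.aeval_algHom_apply, ← Polynomial.aeval_algHom_apply, aeval_C] at e2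
    simp only [map_add, aeval_X, Matrix.cons_val_zero, Polynomial.aeval_X_left_apply] at e2
    rw [Polynomial.comp_eq_aeval]
    rw [show algebraMap ℂ (Polynomial ℂ) e0 = Polynomial.C e0 from rfl] at e2
    exact e2
  have hcoef : ∀ n : ℕ, 2 ≤ n → A0.coeff n = 0 := by
    intro n hn
    have hXX : (Polynomial.X + Polynomial.X : Polynomial ℂ)
        = Polynomial.C 2 * Polynomial.X := by rw [map_ofNat, two_mul]
    have hcc := congrArg (fun p : Polynomial ℂ => p.coeff n) hcomp2
    rw [show (2 : Polynomial ℂ) * A0 = Polynomial.C 2 * A0 from by rw [map_ofNat]] at hcc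
    simp only [hXX, Polynomial.coeff_add, coeff_comp_C_mul_X, Polynomial.coeff_C,
      Polynomial.coeff_C_mul] at hcc
    rw [if_neg (by omega)] at hcc
    have hne : (2 : ℂ) ^ n - 2 ≠ 0 := by
      have key2 : ((2 ^ n : ℕ) : ℂ) ≠ ((2 : ℕ) : ℂ) := by
        rw [Ne, Nat.cast_inj]
        have : (4 : ℕ) ≤ 2 ^ n := by
          calc (4 : ℕ) = 2 ^ 2 := rfl
          _ ≤ 2 ^ n := Nat.pow_le_pow_right (by norm_num) hn
        omega
      intro hcontra
      apply key2
      push_cast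
      linear_combination hcontra
    have : ((2 : ℂ) ^ n - 2) * A0.coeff n = 0 := by linear_combination hcc
    rcases mul_eq_zero.mp this with h | h
    · exact absurd h hne
    · exact h
  have hA0deg : A0.natDegree ≤ 1 :=
    Polynomial.natDegree_le_iff_coeff_eq_zero.mpr (fun N hN => hcoef N (by omega))
  have hA0form : A0 = Polynomial.C (A0.coeff 1) * Polynomial.X + Polynomial.C e0 :=
    Polynomial.eq_X_add_C_of_natDegree_le_one hA0deg
  -- Step 6 : conclude
  refine ⟨A0.coeff 1, e0, ?_⟩
  have hGback := (bk_toQ G).symm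
  rw [hQ, hA1C, hA0form] at hGback
  rw [hGback]
  simp only [map_add, map_mul, map_one, bk, Polynomial.aevalTower_X, Polynomial.aevalTower_C,
    map_add, map_mul, Polynomial.aeval_X, Polynomial.aeval_C]
  rw [show (algebraMap ℂ P2) (A0.coeff 1) = C (A0.coeff 1) from rfl,
    show (algebraMap ℂ P2) e0 = C e0 from rfl]
  ring


lemma sb_id (p : P2) : aeval ![(X 0 : P2), X 1] p = p := by
  rw [show ![(X 0 : P2), X 1] = X from by funext i; fin_cases i <;> rfl, aeval_X_left_apply]

lemma invol_extract (h2 w : P2) (hs : sb h2 (-lm' - pa') pa' = w) :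
    h2 = (aeval ![-lm' - pa', pa'] : P2 →ₐ[ℂ] P2) w := by
  have e := congrArg (fun p : P2 => (aeval ![-lm' - pa', pa'] : P2 →ₐ[ℂ] P2) p) hs
  simp only [sb] at e
  rw [aeval_pair] at e
  simp only [map_neg, map_sub, aeval_X, lm', pa', Matrix.cons_val_zero, Matrix.cons_val_one,
    Matrix.head_cons] at e
  rw [show -(-(X 0 : P2) - X 1) - X 1 = X 0 by ring] at e
  simp only [lm', pa']
  rw [← e, sb_id]
/-- The system `S(a,b,c)` of equations (E1)-(E14). -/
def SatS (a b c : ℂ) (g1 g2 h1 h2 k1 k2 : P2) : Prop :=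
  -- (E1)
  ((C (a - 1) * lm - mu + C b) * sb h1 (lm + mu) pa =
      sb h1 mu (lm + pa) * (pa + lm + C c) + sb h2 mu (lm + pa) * sb g1 lm pa
        - (pa + mu + lm + C c) * sb h1 mu pa) ∧
  -- (E2)
  ((C (a - 1) * lm - mu + C b) * sb h2 (lm + mu) pa =
      sb h2 mu (lm + pa) * sb g2 lm pa - (pa + mu + lm + C c) * sb h2 mu pa) ∧
  -- (E3)
  ((lm - mu) * sb g1 (lm + mu) pa =
      sb g1 mu (lm + pa) * (pa + lm + C c) + sb g2 mu (lm + pa) * sb g1 lm pa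
        - sb g1 lm (mu + pa) * (pa + mu + C c) - sb g2 lm (mu + pa) * sb g1 mu pa) ∧
  -- (E4)
  ((lm - mu) * sb g2 (lm + mu) pa =
      sb g2 mu (lm + pa) * sb g2 lm pa - sb g2 lm (mu + pa) * sb g2 mu pa) ∧
  -- (E5)
  ((C (a - 1) * lm - mu + C b) * sb k1 (lm + mu) pa =
      sb k1 mu (lm + pa) * (pa + lm + C c) + sb k2 mu (lm + pa) * sb g1 lm pa
        - sb g1 lm (mu + pa) * sb h1 mu pa - sb g2 lm (mu + pa) * sb k1 mu pa) ∧
  -- (E6)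
  ((C (a - 1) * lm - mu + C b) * sb k2 (lm + mu) pa =
      sb k2 mu (lm + pa) * sb g2 lm pa - sb g1 lm (mu + pa) * sb h2 mu pa
        - sb g2 lm (mu + pa) * sb k2 mu pa) ∧
  -- (E7)
  (sb h1 mu (lm + pa) * sb h1 lm pa + sb h2 mu (lm + pa) * sb k1 lm pa =
      sb h1 lm (mu + pa) * sb h1 mu pa + sb h2 lm (mu + pa) * sb k1 mu pa) ∧
  -- (E8)
  (sb h1 mu (lm + pa) * sb h2 lm pa + sb h2 mu (lm + pa) * sb k2 lm pa =
      sb h1 lm (mu + pa) * sb h2 mu pa + sb h2 lm (mu + pa) * sb k2 mu pa) ∧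
  -- (E9)
  (sb k1 mu (lm + pa) * sb h1 lm pa + sb k2 mu (lm + pa) * sb k1 lm pa =
      sb k1 lm (mu + pa) * sb h1 mu pa + sb k2 lm (mu + pa) * sb k1 mu pa) ∧
  -- (E10)
  (sb k1 mu (lm + pa) * sb h2 lm pa + sb k2 mu (lm + pa) * sb k2 lm pa =
      sb k1 lm (mu + pa) * sb h2 mu pa + sb k2 lm (mu + pa) * sb k2 mu pa) ∧
  -- (E11)
  (g1 = sb h1 (-lm' - pa') pa') ∧
  -- (E12)
  (g2 - sb h2 (-lm' - pa') pa' = pa' + C a * lm' + C b) ∧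
  -- (E13)
  (k1 = sb k1 (-lm' - pa') pa') ∧
  -- (E14)
  (k2 = sb k2 (-lm' - pa') pa')

/-- Lemma 3.1: if `(g₁,g₂,h₁,h₂,k₁,k₂)` satisfies `S(a,b,c)`, then `(g₂,h₂)`
is one of the three cases (A), (B), (C). -/
theorem stmt0 (a b c : ℂ) (g1 g2 h1 h2 k1 k2 : P2)
    (hS : SatS a b c g1 g2 h1 h2 k1 k2) :
    (g2 = pa' + C a * lm' + C b ∧ h2 = 0) ∨
    (g2 = pa' + C a * lm' + C (b + c) ∧ h2 = C c ∧ c ≠ 0) ∨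
    (g2 = pa' + C (a - 1) * lm' + C (b + c) ∧ h2 = pa' + lm' + C c) := by
  obtain ⟨hE1, hE2, hE3, hE4, hE5, hE6, hE7, hE8, hE9, hE10, hE11, hE12, hE13, hE14⟩ := hS
  by_cases hG : g2 = 0
  · exfalso
    have hs : sb h2 (-lm' - pa') pa' = -(pa' + C a * lm' + C b) := by
      rw [hG] at hE12
      linear_combination -hE12
    have hh2 : h2 = C a * lm' + C a * pa' - pa' - C b := by
      rw [invol_extract h2 _ hs]
      simp only [lm', pa', map_neg, map_add, map_mul, aeval_C, aeval_X, Matrix.cons_val_zero,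
        Matrix.cons_val_one, Matrix.head_cons]
      rw [show (algebraMap ℂ P2) a = C a from rfl, show (algebraMap ℂ P2) b = C b from rfl]
      ring
    rw [hG, hh2] at hE2
    have p00 := congrArg (fun p : P3 => (aeval ![(0:ℂ), 0, 0] : P3 →ₐ[ℂ] ℂ) p) hE2
    have p01 := congrArg (fun p : P3 => (aeval ![(0:ℂ), 0, 1] : P3 →ₐ[ℂ] ℂ) p) hE2
    have p02 := congrArg (fun p : P3 => (aeval ![(0:ℂ), 0, 2] : P3 →ₐ[ℂ] ℂ) p) hE2
    have p10 := congrArg (fun p : P3 => (aeval ![(0:ℂ), 1, 0] : P3 →ₐ[ℂ] ℂ) p) hE2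
    have p11 := congrArg (fun p : P3 => (aeval ![(0:ℂ), 1, 1] : P3 →ₐ[ℂ] ℂ) p) hE2
    simp only [sb, lm, mu, pa, lm', pa', map_neg, map_add, map_sub, map_mul, map_zero, map_one,
      aeval_C, aeval_X, Matrix.cons_val_zero, Matrix.cons_val_one, Matrix.head_cons,
      Matrix.cons_val_two, Matrix.tail_cons, aeval_pair, MvPolynomial.algebraMap_eq,
      Algebra.algebraMap_self, RingHom.id_apply, mul_zero, zero_mul, add_zero, zero_add,
      mul_one, one_mul, sub_zero, zero_sub, neg_zero, neg_neg] at p00 p01 p02 p10 p11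
    have hfa : (2 : ℂ) = 0 := by
      linear_combination -(p02 - 2*p01 + p00) + 2*(p11 - p10 - p01 + p00)
    norm_num at hfa
  · obtain ⟨α, e, hGform⟩ := g2_structure g2 hG hE4
    have hs : sb h2 (-lm' - pa') pa' = (C α - C a) * lm' + (C e - C b) := by
      rw [hGform] at hE12
      linear_combination -hE12
    have hh2 : h2 = (C a - C α) * lm' + (C a - C α) * pa' + (C e - C b) := by
      rw [invol_extract h2 _ hs]
      simp only [lm', pa', map_neg, map_add, map_sub, map_mul, aeval_C, aeval_X,
        MvPolynomial.algebraMap_eq, Matrix.cons_val_zero, Matrix.cons_val_one, Matrix.head_cons]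
      ring
    rw [hGform, hh2] at hE2
    have p00 := congrArg (fun p : P3 => (aeval ![(0:ℂ), 0, 0] : P3 →ₐ[ℂ] ℂ) p) hE2
    have p01 := congrArg (fun p : P3 => (aeval ![(0:ℂ), 0, 1] : P3 →ₐ[ℂ] ℂ) p) hE2
    have p20 := congrArg (fun p : P3 => (aeval ![(1:ℂ), 0, 0] : P3 →ₐ[ℂ] ℂ) p) hE2
    simp only [sb, lm, mu, pa, lm', pa', map_neg, map_add, map_sub, map_mul, map_zero, map_one,
      aeval_C, aeval_X, Matrix.cons_val_zero, Matrix.cons_val_one, Matrix.head_cons,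
      Matrix.cons_val_two, Matrix.tail_cons, aeval_pair, MvPolynomial.algebraMap_eq,
      Algebra.algebraMap_self, RingHom.id_apply, mul_zero, zero_mul, add_zero, zero_add,
      mul_one, one_mul, sub_zero, zero_sub, neg_zero, neg_neg] at p00 p01 p20
    -- scalar equations, with t := a - α, s := e - b :
    have hss : (e - b) * ((e - b) - c) = 0 := by linear_combination -p00
    have hts : (a - α) * ((e - b) - c) = 0 := by linear_combination -(p01 - p00)
    have htt : (a - α) * (1 - (a - α)) = 0 := by linear_combination -(p20 - p00)
    rcases mul_eq_zero.mp htt with ht0 | ht1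
    · -- t = 0, i.e. α = a
      have hα : α = a := by linear_combination -ht0
      rcases mul_eq_zero.mp hss with hs0 | hsc
      · -- s = 0 : case (A)
        left
        refine ⟨?_, ?_⟩
        · rw [hGform, hα, show e = b from by linear_combination hs0]
        · rw [hh2, hα, show e = b from by linear_combination hs0]
          ring
      · -- s = c
        by_cases hc : c = 0
        · left
          refine ⟨?_, ?_⟩
          · rw [hGform, hα, show e = b from by linear_combination hsc + hc]
          · rw [hh2, hα, show e = b from by linear_combination hsc + hc]
            ring
        · right; left
          refine ⟨?_, ?_, hc⟩
          · rw [hGform, hα, show e = b + c from by linear_combination hsc]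
          · rw [hh2, hα, show e = b + c from by linear_combination hsc,
              show (C (b + c) : P2) = C b + C c from map_add C b c]
            ring
    · -- t = 1 : case (C)
      have hα : α = a - 1 := by linear_combination ht1
      have hsc : e = b + c := by
        have h1 : a - α = 1 := by linear_combination -ht1
        rw [h1, one_mul, sub_eq_zero] at hts
        linear_combination hts
      right; right
      refine ⟨?_, ?_⟩
      · rw [hGform, hα, hsc]
      · rw [hh2, hα, hsc,
          show (C (a - 1) : P2) = C a - C 1 from map_sub C a 1,
          show (C (b + c) : P2) = C b + C c from map_add C b c, map_one]
        ring


end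
end

section
/- A polynomial g ∈ ℂ[λ,∂] satisfies the identity (λ−μ)·g(λ+μ,∂) = g(μ,λ+∂)·g(λ,∂) − g(λ,μ+∂)·g(μ,∂) in ℂ[λ,μ,∂] if and only if either g = 0 or there exist e, f ∈ ℂ such that g(λ,∂) = ∂ + eλ + f. -/
open MvPolynomial

noncomputable section

/-!
View `g` as a polynomial in `∂` over `ℂ[λ]` and the identity as one in `ℂ[λ,μ][∂]`.
If `g` has `∂`-degree `n ≥ 2` with leading coefficient `c(λ)`, the coefficient of `∂^(2n-1)`
on the right is `n (λ - μ) c(λ) c(μ) ≠ 0`, while the left side has `∂`-degree `n`.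
So `g = b(λ) ∂ + a(λ)`, and the coefficients of `∂` and `1` give
`b(λ + μ) = b(λ) b(μ)` and `(λ - μ) a(λ + μ) = λ b(μ) a(λ) - μ b(λ) a(μ)`.
The first forces `b = 0` or `b = 1`; then the second forces `a = 0`, respectively
(at `μ = 1`, comparing top coefficients) `deg a ≤ 1`.
-/

namespace Polynomial

variable {S : Type*} [CommRing S]

theorem coeff_taylor_of_natDegree_le {f : S[X]} {n : ℕ} (r : S) (h : f.natDegree ≤ n) :
    (taylor r f).coeff n = f.coeff n := by
  rw [taylor_coeff, eq_C_of_natDegree_le_zero ((natDegree_hasseDeriv_le f n).trans (by omega)),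
    eval_C, hasseDeriv_coeff, zero_add, Nat.choose_self, Nat.cast_one, one_mul]

theorem coeff_taylor_of_natDegree_le_add_one {f : S[X]} {n : ℕ} (r : S)
    (h : f.natDegree ≤ n + 1) :
    (taylor r f).coeff n = f.coeff n + (n + 1) * r * f.coeff (n + 1) := by
  rw [taylor_coeff,
    eq_X_add_C_of_natDegree_le_one ((natDegree_hasseDeriv_le f n).trans (by omega))]
  simp only [eval_add, eval_mul, eval_C, eval_X, hasseDeriv_coeff, zero_add, Nat.choose_self,
    Nat.cast_one, one_mul, add_comm 1 n, Nat.choose_succ_self_right]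
  push_cast
  ring

theorem natDegree_taylor_sub_le {f : S[X]} {n : ℕ} (r : S) (h : f.natDegree ≤ n + 1) :
    (taylor r f - f).natDegree ≤ n := by
  refine natDegree_le_iff_coeff_eq_zero.2 fun m hm => ?_
  rw [coeff_sub, coeff_taylor_of_natDegree_le r (by omega), sub_self]

theorem coeff_taylor_mul_sub_taylor_mul {p q : S[X]} {k : ℕ} (l u : S)
    (hp : p.natDegree ≤ k + 1) (hq : q.natDegree ≤ k + 1) :
    (taylor l q * p - taylor u p * q).coeff (2 * k + 1) =
      (k + 1) * (l - u) * (p.coeff (k + 1) * q.coeff (k + 1)) := by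
  have hsplit :
      taylor l q * p - taylor u p * q = (taylor l q - q) * p - (taylor u p - p) * q := by
    ring
  rw [hsplit, coeff_sub, show 2 * k + 1 = k + (k + 1) by ring,
    coeff_mul_add_eq_of_natDegree_le (natDegree_taylor_sub_le l hq) hp,
    coeff_mul_add_eq_of_natDegree_le (natDegree_taylor_sub_le u hp) hq, coeff_sub, coeff_sub,
    coeff_taylor_of_natDegree_le_add_one l hq, coeff_taylor_of_natDegree_le_add_one u hp]
  ring

theorem natDegree_le_one_of_C_sub_mul_eq [IsDomain S] [CharZero S] {l u : S} (hlu : l ≠ u)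
    {p q A : S[X]} (hq : q.natDegree = p.natDegree) (hA : A.natDegree ≤ p.natDegree)
    (h : C (l - u) * A = taylor l q * p - taylor u p * q) : p.natDegree ≤ 1 := by
  by_contra! hp
  obtain ⟨k, hk⟩ : ∃ k, p.natDegree = k + 1 := ⟨p.natDegree - 1, by omega⟩
  have hcoeff := congrArg (coeff · (2 * k + 1)) h
  simp only [coeff_C_mul, coeff_eq_zero_of_natDegree_lt (show A.natDegree < 2 * k + 1 by omega),
    mul_zero] at hcoeff
  rw [coeff_taylor_mul_sub_taylor_mul l u hk.le (hq.trans hk).le,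
    show p.coeff (k + 1) = p.leadingCoeff by rw [leadingCoeff, hk],
    show q.coeff (k + 1) = q.leadingCoeff by rw [leadingCoeff, hq, hk]] at hcoeff
  have hp0 : p ≠ 0 := by rintro rfl; simp at hp
  have hq0 : q ≠ 0 := by rintro rfl; simp at hq; omega
  exact mul_ne_zero (mul_ne_zero (Nat.cast_add_one_ne_zero k) (sub_ne_zero.2 hlu))
    (mul_ne_zero (leadingCoeff_ne_zero.2 hp0) (leadingCoeff_ne_zero.2 hq0)) hcoeff.symm

end Polynomial

theorem eq_zero_of_aeval_add_eq_zero {K : Type*} [CommSemiring K] {a : Polynomial K}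
    (h : Polynomial.aeval (X 0 + X 1 : MvPolynomial (Fin 2) K) a = 0) : a = 0 := by
  have := congrArg (aeval ![(Polynomial.X : Polynomial K), 0]) h
  simpa [← Polynomial.aeval_algHom_apply] using this

section

variable {K : Type*} [CommRing K] [IsDomain K] [CharZero K]

theorem eq_zero_or_eq_one_of_aeval_add_eq_mul {b : Polynomial K}
    (h : Polynomial.aeval (X 0 + X 1 : MvPolynomial (Fin 2) K) b =
      Polynomial.aeval (X 0 : MvPolynomial (Fin 2) K) b * Polynomial.aeval (X 1) b) :
    b = 0 ∨ b = 1 := by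
  have hsq : b.comp (Polynomial.X + Polynomial.X) = b * b := by
    have := congrArg (aeval ![(Polynomial.X : Polynomial K), Polynomial.X]) h
    simpa [← Polynomial.aeval_algHom_apply, Polynomial.comp_eq_aeval] using this
  rcases eq_or_ne b 0 with hb | hb
  · exact Or.inl hb
  have hdeg : b.natDegree = 0 := by
    have := congrArg Polynomial.natDegree hsq
    rw [Polynomial.natDegree_comp, Polynomial.natDegree_mul hb hb,
      show (Polynomial.X + Polynomial.X : Polynomial K).natDegree = 1 by compute_degree!] at this
    omega
  obtain ⟨c, rfl⟩ := Polynomial.natDegree_eq_zero.1 hdeg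
  rw [Polynomial.C_comp] at hsq
  exact IsIdempotentElem.iff_eq_zero_or_one.1 hsq.symm

theorem natDegree_le_one_of_sub_mul_aeval_add_eq {a : Polynomial K}
    (h : (X 0 - X 1) * Polynomial.aeval (X 0 + X 1 : MvPolynomial (Fin 2) K) a =
      X 0 * Polynomial.aeval (X 0 : MvPolynomial (Fin 2) K) a - X 1 * Polynomial.aeval (X 1) a) :
    a.natDegree ≤ 1 := by
  have hconst : Polynomial.aeval (1 : Polynomial K) a = Polynomial.C (a.eval 1) := by
    rw [← map_one Polynomial.C, ← Polynomial.algebraMap_eq,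
      Polynomial.aeval_algebraMap_apply_eq_algebraMap_eval]
  have h1 : (Polynomial.X - 1) * a.taylor 1 = Polynomial.X * a - Polynomial.C (a.eval 1) := by
    have := congrArg (aeval ![(Polynomial.X : Polynomial K), 1]) h
    simpa [← Polynomial.aeval_algHom_apply, Polynomial.taylor_apply, Polynomial.comp_eq_aeval,
      hconst] using this
  by_contra! ha
  obtain ⟨k, hk⟩ : ∃ k, a.natDegree = k + 1 + 1 := ⟨a.natDegree - 2, by omega⟩
  have hc := congrArg (Polynomial.coeff · (k + 1 + 1)) h1
  simp only [sub_mul, one_mul, Polynomial.coeff_sub, Polynomial.coeff_X_mul, Polynomial.coeff_C,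
    Polynomial.coeff_taylor_of_natDegree_le 1 hk.le,
    Polynomial.coeff_taylor_of_natDegree_le_add_one 1 hk.le] at hc
  have hlead : ((k : K) + 1) * a.leadingCoeff = 0 := by
    rw [Polynomial.leadingCoeff, hk]
    push_cast at hc
    linear_combination hc
  have ha0 : a ≠ 0 := by rintro rfl; simp at ha
  exact mul_ne_zero (Nat.cast_add_one_ne_zero k) (Polynomial.leadingCoeff_ne_zero.2 ha0) hlead

end

section

variable {S : Type*} [CommRing S] [Algebra ℂ S]

/-- `evalFst g r = g(r, ∂)`, as a polynomial in `∂` over `S`. -/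
def evalFst (g : P2) (r : S) : Polynomial S :=
  aeval ![Polynomial.C r, Polynomial.X] g

theorem evalFst_eq_map (g : P2) (r : S) :
    evalFst g r =
      (evalFst g (Polynomial.X : Polynomial ℂ)).map (Polynomial.aeval r).toRingHom := by
  have h : (aeval ![Polynomial.C r, Polynomial.X] : P2 →ₐ[ℂ] Polynomial S) =
      (Polynomial.mapAlgHom (Polynomial.aeval r)).comp
        (aeval ![Polynomial.C Polynomial.X, Polynomial.X]) := by
    ext i; fin_cases i <;> simp
  exact DFunLike.congr_fun h g

theorem aeval_C_C_add_X_eq_taylor (g : P2) (r s : S) :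
    aeval ![Polynomial.C r, Polynomial.C s + Polynomial.X] g = (evalFst g r).taylor s := by
  have h : (aeval ![Polynomial.C r, Polynomial.C s + Polynomial.X] : P2 →ₐ[ℂ] Polynomial S) =
      ((Polynomial.taylorAlgHom s).restrictScalars ℂ).comp
        (aeval ![Polynomial.C r, Polynomial.X]) := by
    ext i; fin_cases i <;> simp [add_comm]
  exact DFunLike.congr_fun h g

theorem map_sb {n : ℕ} (φ : MvPolynomial (Fin n) ℂ →ₐ[ℂ] S) (g : P2)
    (u v : MvPolynomial (Fin n) ℂ) : φ (sb g u v) = aeval ![φ u, φ v] g := by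
  rw [sb, comp_aeval_apply]
  congr 2
  funext i
  fin_cases i <;> rfl

end

theorem evalFst_X_injective :
    Function.Injective (fun g : P2 => evalFst g (Polynomial.X : Polynomial ℂ)) := by
  have hinv : ∀ g : P2, ((evalFst g (Polynomial.X : Polynomial ℂ)).map
      (Polynomial.aeval (X 0 : P2)).toRingHom).eval (X 1) = g := by
    intro g
    have h : ((Polynomial.aeval (X 1 : P2)).restrictScalars ℂ).comp
        (aeval ![Polynomial.C (X 0 : P2), Polynomial.X]) = AlgHom.id ℂ P2 := by
      ext i; fin_cases i <;> simp
    rw [← evalFst_eq_map]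
    exact DFunLike.congr_fun h g
  intro g h hgh
  dsimp only at hgh
  rw [← hinv g, ← hinv h, hgh]

theorem natDegree_evalFst_X (g : P2) (i : Fin 2) :
    (evalFst g (X i : P2)).natDegree = (evalFst g (Polynomial.X : Polynomial ℂ)).natDegree := by
  rw [evalFst_eq_map]
  exact Polynomial.natDegree_map_eq_of_injective (Polynomial.toMvPolynomial_injective i) _

theorem X_zero_sub_X_one_ne_zero : (X 0 - X 1 : P2) ≠ 0 :=
  sub_ne_zero.2 (X_injective.ne (by decide))

def SolvesEquation (g : P2) : Prop :=
  (lm - mu) * sb g (lm + mu) pa = sb g mu (lm + pa) * sb g lm pa - sb g lm (mu + pa) * sb g mu pa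

section

variable {g : P2}

-- The equation read in `ℂ[λ, μ][∂]`, where `ℂ[λ, μ]` is realised as `P2` with `λ = X 0`, `μ = X 1`.
theorem SolvesEquation.C_sub_mul_evalFst_eq (H : SolvesEquation g) :
    Polynomial.C (X 0 - X 1) * evalFst g (X 0 + X 1 : P2) =
      (evalFst g (X 1 : P2)).taylor (X 0) * evalFst g (X 0 : P2) -
        (evalFst g (X 0 : P2)).taylor (X 1) * evalFst g (X 1 : P2) := by
  have h := congrArg (aeval ![Polynomial.C (X 0), Polynomial.C (X 1), Polynomial.X] :
    P3 →ₐ[ℂ] Polynomial P2) H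
  simp only [map_mul, map_sub, map_add, map_sb, lm, mu, pa, aeval_X, Matrix.cons_val_zero,
    Matrix.cons_val_one, Matrix.cons_val_two, Matrix.head_cons, Matrix.tail_cons,
    aeval_C_C_add_X_eq_taylor] at h
  rw [Polynomial.C_sub, evalFst, Polynomial.C_add]
  exact h

theorem SolvesEquation.aeval_add_eqs (H : SolvesEquation g) {a b : Polynomial ℂ}
    (hG : evalFst g (Polynomial.X : Polynomial ℂ) =
      Polynomial.C b * Polynomial.X + Polynomial.C a) :
    Polynomial.aeval (X 0 + X 1 : P2) b =
        Polynomial.aeval (X 0 : P2) b * Polynomial.aeval (X 1 : P2) b ∧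
      (X 0 - X 1) * Polynomial.aeval (X 0 + X 1 : P2) a =
        X 0 * Polynomial.aeval (X 1 : P2) b * Polynomial.aeval (X 0 : P2) a -
          X 1 * Polynomial.aeval (X 0 : P2) b * Polynomial.aeval (X 1 : P2) a := by
  have hr : ∀ r : P2, evalFst g r =
      Polynomial.C (Polynomial.aeval r b) * Polynomial.X + Polynomial.C (Polynomial.aeval r a) := by
    intro r
    rw [evalFst_eq_map, hG]
    simp
  have hdeg (r : P2) : (evalFst g r).natDegree ≤ 0 + 1 := by
    rw [hr]
    exact Polynomial.natDegree_linear_le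
  have h := H.C_sub_mul_evalFst_eq
  constructor
  · have h1 := congrArg (Polynomial.coeff · (2 * 0 + 1)) h
    simp only [Polynomial.coeff_C_mul] at h1
    rw [Polynomial.coeff_taylor_mul_sub_taylor_mul _ _ (hdeg _) (hdeg _)] at h1
    simp only [hr, mul_zero, zero_add, Polynomial.coeff_add, Polynomial.coeff_mul_X,
      Polynomial.coeff_C_zero, Polynomial.coeff_C_succ, add_zero, CharP.cast_eq_zero, one_mul,
      mul_eq_mul_left_iff] at h1
    exact h1.resolve_right X_zero_sub_X_one_ne_zero
  · simp only [hr, map_add, Polynomial.taylor_mul, Polynomial.taylor_C, Polynomial.taylor_X] at h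
    have h0 := congrArg (Polynomial.coeff · 0) h
    simp only [map_sub, Polynomial.mul_coeff_zero, Polynomial.coeff_sub, Polynomial.coeff_C_zero,
      Polynomial.coeff_add, Polynomial.coeff_X_zero, mul_zero, zero_add] at h0
    linear_combination h0

theorem SolvesEquation.natDegree_evalFst_X_le_one (H : SolvesEquation g) :
    (evalFst g (Polynomial.X : Polynomial ℂ)).natDegree ≤ 1 := by
  rw [← natDegree_evalFst_X g 0]
  refine Polynomial.natDegree_le_one_of_C_sub_mul_eq (sub_ne_zero.1 X_zero_sub_X_one_ne_zero)
    (by rw [natDegree_evalFst_X, natDegree_evalFst_X]) ?_ H.C_sub_mul_evalFst_eq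
  rw [evalFst_eq_map, natDegree_evalFst_X]
  exact Polynomial.natDegree_map_le

theorem SolvesEquation.eq_zero_or_eq_X_add_C_mul_X_add_C (H : SolvesEquation g) :
    g = 0 ∨ ∃ e f : ℂ, g = pa' + C e * lm' + C f := by
  have hlin := Polynomial.eq_X_add_C_of_natDegree_le_one H.natDegree_evalFst_X_le_one
  set G := evalFst g (Polynomial.X : Polynomial ℂ) with hG
  obtain ⟨hb, ha⟩ := H.aeval_add_eqs hlin
  rcases eq_zero_or_eq_one_of_aeval_add_eq_mul hb with hb0 | hb1
  · left
    rw [hb0] at ha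
    simp only [map_zero, mul_zero, zero_mul, sub_self, mul_eq_zero] at ha
    have ha0 := eq_zero_of_aeval_add_eq_zero (ha.resolve_left X_zero_sub_X_one_ne_zero)
    refine evalFst_X_injective ?_
    dsimp only
    rw [← hG, hlin, hb0, ha0]
    simp [evalFst]
  · right
    rw [hb1] at ha
    simp only [map_one, mul_one] at ha
    obtain ⟨e, f, hef⟩ : ∃ e f : ℂ, G.coeff 0 = Polynomial.C e * Polynomial.X + Polynomial.C f :=
      ⟨_, _, Polynomial.eq_X_add_C_of_natDegree_le_one
        (natDegree_le_one_of_sub_mul_aeval_add_eq ha)⟩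
    refine ⟨e, f, evalFst_X_injective ?_⟩
    dsimp only
    rw [← hG, hlin, hb1, hef]
    simp only [map_one, one_mul, map_add, map_mul, evalFst, pa', lm', aeval_X, algHom_C,
      Matrix.cons_val_zero, Matrix.cons_val_one, Matrix.cons_val_fin_one,
      Polynomial.algebraMap_apply, Polynomial.algebraMap_eq]
    ring

end

/-- `g ∈ ℂ[λ,∂]` satisfies
`(λ−μ)·g(λ+μ,∂) = g(μ,λ+∂)·g(λ,∂) − g(λ,μ+∂)·g(μ,∂)` iff `g = 0` or
`g(λ,∂) = ∂ + eλ + f` for some `e, f ∈ ℂ`. -/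
theorem stmt1 (g : P2) :
    ((lm - mu) * sb g (lm + mu) pa =
        sb g mu (lm + pa) * sb g lm pa - sb g lm (mu + pa) * sb g mu pa) ↔
    (g = 0 ∨ ∃ e f : ℂ, g = pa' + C e * lm' + C f) := by
  refine ⟨SolvesEquation.eq_zero_or_eq_X_add_C_mul_X_add_C, ?_⟩
  rintro (rfl | ⟨e, f, rfl⟩)
  · simp [sb]
  · simp only [sb, lm, mu, pa, lm', pa', map_add, map_mul, aeval_X, aeval_C,
      Matrix.cons_val_zero, Matrix.cons_val_one]
    ring

end
end

section
/- Let a, b, c ∈ ℂ. A polynomial k₁ ∈ ℂ[λ,∂] satisfies both identities ((a−1)λ−μ+b)·k₁(λ+μ,∂) = (∂+λ+c)·k₁(μ,λ+∂) − (∂+μ+aλ+b)·k₁(μ,∂) (in ℂ[λ,μ,∂]) and k₁(λ,∂) = k₁(−λ−∂,∂) (in ℂ[λ,∂]) if and only if either k₁ = 0, or a = 1, c = 2b and k₁ is a constant polynomial. -/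
/-! Specializing the identity at `λ = 0` forces `c = 2b`; at `μ = 0` it expresses
`((a - 1)λ + b) · k₁` through `f(∂) = k₁(0, ∂)`. Putting moreover `λ = -∂` and using the symmetry
`k₁(-∂, ∂) = k₁(0, ∂)` gives `2((1 - a)∂ + b) · f = c · k₁(0, 0)`. If `a ≠ 1`, the specialization
at the root of `(1 - a)∂ + b` shows `c · k₁(0, 0) = 0`, so `f = 0` and then `k₁ = 0`. If `a = 1`
and `b ≠ 0`, `f` is constant and hence so is `k₁`.

In the degenerate case `a = 1`, `b = c = 0`, the identity at `λ = -∂` makes `k₁` invariant under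
`λ ↦ λ - ∂`, while at `∂ = 0` it writes `∂ · k₁` in terms of `g(λ) = k₁(λ, 0)`. Together they give
`g(μ + ∂) + g(μ - ∂) = 2 g(μ)`; as `g` is even (the symmetry at `∂ = 0`), `g` is constant, and
then so is `k₁`. -/

open MvPolynomial

noncomputable section

theorem aeval_sb {n m : ℕ} (k : P2) (u v : MvPolynomial (Fin n) ℂ)
    (M : Fin n → MvPolynomial (Fin m) ℂ) :
    aeval M (sb k u v) = sb k (aeval M u) (aeval M v) := by
  rw [sb, sb, ← AlgHom.comp_apply, comp_aeval]
  congr 2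
  funext i
  fin_cases i <;> rfl

theorem sb_X_zero_X_one (k : P2) : sb k (X 0) (X 1) = k := by
  rw [sb, show ![(X 0 : P2), X 1] = X from by ext i; fin_cases i <;> rfl, aeval_X_left_apply]

theorem sb_zero_zero {n : ℕ} (k : P2) :
    sb k (0 : MvPolynomial (Fin n) ℂ) 0 = C (constantCoeff k) := by
  rw [sb, show ![(0 : MvPolynomial (Fin n) ℂ), 0] = 0 from by ext i; fin_cases i <;> rfl, aeval_zero]
  rfl

theorem sb_C {n : ℕ} (x : ℂ) (u v : MvPolynomial (Fin n) ℂ) : sb (C x) u v = C x :=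
  aeval_C _ x

theorem sb_aeval_eq_C {n : ℕ} {k : P2} {u v : P2} {x : ℂ} (h : sb k u v = C x)
    (M : Fin 2 → MvPolynomial (Fin n) ℂ) : sb k (aeval M u) (aeval M v) = C x := by
  rw [← aeval_sb, h, aeval_C]
  rfl

theorem C_mul_X_add_C_ne_zero {n : ℕ} {α : ℂ} (hα : α ≠ 0) (i : Fin n) (β : ℂ) :
    C α * X i + C β ≠ 0 := by
  intro h
  have h' := congrArg (coeff (Finsupp.single i 1)) h
  simp only [coeff_add, coeff_C_mul, coeff_X, coeff_C, coeff_zero, ↓reduceIte, mul_one, add_zero,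
    if_neg (Finsupp.single_ne_zero.mpr one_ne_zero).symm] at h'
  exact hα h'

def SolvesKernelEq (a b c : ℂ) (k : P2) : Prop :=
  (C (a - 1) * lm - mu + C b) * sb k (lm + mu) pa =
    (pa + lm + C c) * sb k mu (lm + pa) - (pa + mu + C a * lm + C b) * sb k mu pa

def IsFlipInvariant (k : P2) : Prop :=
  k = sb k (-lm' - pa') pa'

theorem IsFlipInvariant.subst {k : P2} (h : IsFlipInvariant k) {n : ℕ}
    (u d : MvPolynomial (Fin n) ℂ) : sb k u d = sb k (-u - d) d := by
  have h' := congrArg (aeval ![u, d]) h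
  simp only [lm', pa', map_sub, map_neg, aeval_sb, aeval_X, Matrix.cons_val_zero,
    Matrix.cons_val_one] at h'
  exact h'

namespace SolvesKernelEq

variable {a b c : ℂ} {k : P2}

theorem subst (h : SolvesKernelEq a b c k) {n : ℕ} (u w d : MvPolynomial (Fin n) ℂ) :
    (C (a - 1) * u - w + C b) * sb k (u + w) d =
      (d + u + C c) * sb k w (u + d) - (d + w + C a * u + C b) * sb k w d := by
  have h' := congrArg (aeval ![u, w, d]) h
  simpa only [lm, mu, pa, map_add, map_sub, map_mul, aeval_sb, aeval_X, aeval_C, algebraMap_eq,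
    Matrix.cons_val_zero, Matrix.cons_val_one, Matrix.cons_val_two, Matrix.head_cons,
    Matrix.tail_cons] using h'

theorem eq_two_mul_of_ne_zero (h : SolvesKernelEq a b c k) (hk : k ≠ 0) : c = 2 * b := by
  have h0 := h.subst (n := 2) 0 (X 0) (X 1)
  simp only [mul_zero, zero_add, add_zero, sb_X_zero_X_one] at h0
  have hck : C (c - 2 * b) * k = 0 := by
    rw [map_sub, map_mul, map_ofNat]
    linear_combination -h0
  rw [mul_eq_zero, C_eq_zero, sub_eq_zero] at hck
  exact hck.resolve_right hk

theorem mul_eq_of_mu_eq_zero (h : SolvesKernelEq a b c k) :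
    (C (a - 1) * X 0 + C b) * k =
      (X 1 + X 0 + C c) * sb k 0 (X 0 + X 1) - (X 1 + C a * X 0 + C b) * sb k 0 (X 1) := by
  simpa only [sub_zero, add_zero, sb_X_zero_X_one] using h.subst (n := 2) (X 0) 0 (X 1)

theorem two_mul_mul_sb_zero_X_eq (h : SolvesKernelEq a b c k) (hS : IsFlipInvariant k) :
    (2 : P2) * ((C (1 - a) * X 1 + C b) * sb k 0 (X 1)) = C c * C (constantCoeff k) := by
  have h1 := h.subst (n := 2) (-X 1) 0 (X 1)
  have h2 := hS.subst (n := 2) 0 (X 1)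
  simp only [sub_zero, add_zero, neg_zero, zero_sub, add_neg_cancel, neg_add_cancel,
    sb_zero_zero] at h1 h2
  rw [← h2, map_sub, map_one] at h1
  rw [map_sub, map_one]
  linear_combination h1

theorem eq_zero_of_ne_one (h : SolvesKernelEq a b c k) (hS : IsFlipInvariant k) (ha : a ≠ 1) :
    k = 0 := by
  have ha' : a - 1 ≠ 0 := sub_ne_zero.mpr ha
  have hcκ : C c * C (constantCoeff k) = (0 : P2) := by
    -- at `λ = -t`, `μ = 0`, `∂ = t` with `t = b / (a - 1)` both outer coefficients vanish
    have h0 := h.subst (n := 2) (-C (b / (a - 1))) 0 (C (b / (a - 1)))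
    have e1 : C (a - 1) * -C (b / (a - 1)) - 0 + C b = (0 : P2) := by
      rw [← map_neg, ← map_mul, sub_zero, ← map_add, C_eq_zero]
      field_simp
      ring
    have e2 : C (b / (a - 1)) + 0 + C a * -C (b / (a - 1)) + C b = (0 : P2) := by
      rw [← map_neg, ← map_mul, add_zero, ← map_add, ← map_add, C_eq_zero]
      field_simp
      ring
    rw [e1, e2, add_neg_cancel, neg_add_cancel, zero_add, sb_zero_zero] at h0
    linear_combination -h0
  have hf : sb k (0 : P2) (X 1) = C 0 := by
    have hV := h.two_mul_mul_sb_zero_X_eq hS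
    rw [hcκ, mul_eq_zero, mul_eq_zero] at hV
    rcases hV with htwo | hlin | hf0
    · exact absurd htwo two_ne_zero
    · exact absurd hlin (C_mul_X_add_C_ne_zero (by rwa [← neg_sub, neg_ne_zero]) 1 b)
    · rw [hf0, map_zero]
  have hf' := sb_aeval_eq_C hf ![(X 0 : P2), X 0 + X 1]
  simp only [map_zero, aeval_X, Matrix.cons_val_one, Matrix.cons_val_zero] at hf'
  have hμ := h.mul_eq_of_mu_eq_zero
  rw [hf, hf', map_zero, mul_zero, mul_zero, sub_zero, mul_eq_zero] at hμ
  exact hμ.resolve_left (C_mul_X_add_C_ne_zero ha' 0 b)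

theorem eq_C_of_b_ne_zero (h : SolvesKernelEq 1 b (2 * b) k) (hS : IsFlipInvariant k)
    (hb : b ≠ 0) : k = C (constantCoeff k) := by
  have hCb : (C b : P2) ≠ 0 := by rwa [Ne, C_eq_zero]
  have hf : sb k (0 : P2) (X 1) = C (constantCoeff k) := by
    have hV := h.two_mul_mul_sb_zero_X_eq hS
    rw [sub_self, map_zero, zero_mul, zero_add, map_mul, map_ofNat] at hV
    apply mul_left_cancel₀ (mul_ne_zero two_ne_zero hCb)
    linear_combination hV
  have hf' := sb_aeval_eq_C hf ![(X 0 : P2), X 0 + X 1]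
  simp only [map_zero, aeval_X, Matrix.cons_val_one, Matrix.cons_val_zero] at hf'
  have hμ := h.mul_eq_of_mu_eq_zero
  rw [hf, hf', sub_self, map_zero, zero_mul, zero_add, map_mul, map_ofNat, map_one, one_mul] at hμ
  apply mul_left_cancel₀ hCb
  linear_combination hμ

theorem sb_add_add_sb_sub (h : SolvesKernelEq 1 0 0 k) :
    sb k (X 1 + X 0) (0 : P2) + sb k (-X 1 + X 0) 0 = 2 * sb k (X 0) 0 := by
  have hT := h.subst (n := 2) (-X 1) (X 0) (X 1)
  have h1 := h.subst (n := 2) (X 1) (X 0) 0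
  have h2 := h.subst (n := 2) (X 1) (-X 1 + X 0) 0
  simp only [sub_self, map_zero, map_one, zero_mul, one_mul, zero_sub, add_zero, zero_add,
    add_neg_cancel, add_neg_cancel_left, sb_X_zero_X_one] at hT h1 h2
  have hshift : sb k (-X 1 + X 0) (X 1) = k := by
    apply mul_left_cancel₀ (X_ne_zero (0 : Fin 2))
    linear_combination -hT
  rw [hshift] at h2
  apply mul_left_cancel₀ (X_ne_zero (0 : Fin 2))
  linear_combination h2 - h1

theorem sb_X_zero_zero_eq_C (h : SolvesKernelEq 1 0 0 k) (hS : IsFlipInvariant k) :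
    sb k (X 0) (0 : P2) = C (constantCoeff k) := by
  have hadd := congrArg (aeval ![(0 : P2), X 0]) h.sb_add_add_sb_sub
  simp only [map_add, map_mul, map_neg, map_ofNat, map_zero, aeval_sb, aeval_X,
    Matrix.cons_val_zero, Matrix.cons_val_one, add_zero, sb_zero_zero] at hadd
  have heven := hS.subst (n := 2) (X 0) 0
  rw [sub_zero] at heven
  apply mul_left_cancel₀ (two_ne_zero (α := P2))
  linear_combination hadd + heven

theorem eq_C_of_b_eq_zero (h : SolvesKernelEq 1 0 0 k) (hS : IsFlipInvariant k) :
    k = C (constantCoeff k) := by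
  have hg := h.sb_X_zero_zero_eq_C hS
  have hg' := sb_aeval_eq_C hg ![(X 1 + X 0 : P2), X 1]
  simp only [map_zero, aeval_X, Matrix.cons_val_zero] at hg'
  have h1 := h.subst (n := 2) (X 1) (X 0) 0
  simp only [sub_self, map_zero, map_one, zero_mul, one_mul, zero_sub, add_zero, zero_add,
    sb_X_zero_X_one, hg, hg'] at h1
  apply mul_left_cancel₀ (X_ne_zero (1 : Fin 2))
  linear_combination -h1

end SolvesKernelEq

theorem solvesKernelEq_C (b x : ℂ) : SolvesKernelEq 1 b (2 * b) (C x) := by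
  simp only [SolvesKernelEq, sb_C, sub_self, map_zero, map_one, map_mul, map_ofNat]
  ring

theorem isFlipInvariant_C (x : ℂ) : IsFlipInvariant (C x) :=
  (sb_C x _ _).symm

/-- `k₁ ∈ ℂ[λ,∂]` satisfies
`((a−1)λ−μ+b)·k₁(λ+μ,∂) = (∂+λ+c)·k₁(μ,λ+∂) − (∂+μ+aλ+b)·k₁(μ,∂)` and
`k₁(λ,∂) = k₁(−λ−∂,∂)` iff `k₁ = 0`, or `a = 1`, `c = 2b` and `k₁` is constant. -/
theorem stmt2 (a b c : ℂ) (k1 : P2) :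
    (((C (a - 1) * lm - mu + C b) * sb k1 (lm + mu) pa =
        (pa + lm + C c) * sb k1 mu (lm + pa) - (pa + mu + C a * lm + C b) * sb k1 mu pa) ∧
      k1 = sb k1 (-lm' - pa') pa') ↔
    (k1 = 0 ∨ (a = 1 ∧ c = 2 * b ∧ ∃ k : ℂ, k1 = C k)) := by
  change SolvesKernelEq a b c k1 ∧ IsFlipInvariant k1 ↔ _
  constructor
  · rintro ⟨hE, hS⟩
    rcases eq_or_ne k1 0 with hk | hk
    · exact Or.inl hk
    have hc := hE.eq_two_mul_of_ne_zero hk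
    have ha : a = 1 := by
      by_contra ha
      exact hk (hE.eq_zero_of_ne_one hS ha)
    subst hc ha
    refine Or.inr ⟨rfl, rfl, constantCoeff k1, ?_⟩
    rcases eq_or_ne b 0 with rfl | hb
    · rw [mul_zero] at hE
      exact hE.eq_C_of_b_eq_zero hS
    · exact hE.eq_C_of_b_ne_zero hS hb
  · rintro (rfl | ⟨rfl, rfl, x, rfl⟩)
    · exact ⟨by simp [SolvesKernelEq, sb], by simp [IsFlipInvariant, sb]⟩
    · exact ⟨solvesKernelEq_C b x, isFlipInvariant_C x⟩

end
end

section
/- Assume b ≠ 0 and c ≠ 0. Suppose a tuple (g₁, g₂, h₁, h₂, k₁, k₂) of polynomials in ℂ[λ,∂] satisfies the system S(a,b,c) and moreover g₂(λ,∂) = ∂ + aλ + b + c and h₂ = c. Then the tuple is one of the following: (B1) g₁ = h₁ = k₁ = k₂ = 0; (B2) a = 1, c = b, g₁ = h₁ = d for some nonzero constant d, k₁ = −d²/b, and k₂ = −d. -/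
open MvPolynomial

noncomputable section

/-!
Evaluating (E1) at `λ = 0` gives `b h₁(μ, ∂) = c f(∂)` with `f(∂) = g₁(0, ∂)`, and (E11) turns
this into `b g₁(λ, ∂) = c f(∂)`; at `λ = 0` this forces `c = b` unless `f = 0`. Likewise (E6)
and (E5) at `λ = 0` express `k₂` and `k₁` through `f`, `g₁`, `h₁`, so `f = 0` gives (B1).
Otherwise `g₁ = h₁ = f(∂)`, and (E1) at `μ = 0` becomes
`(aλ + ∂ + b) f(∂) = (λ + ∂ + b) f(λ + ∂)`. On the line `λ + ∂ + b = 0` this says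
`(a - 1)(∂ + b) f(∂) = 0`, so `a = 1` because `g₁` is a nonzero polynomial; then taking
`λ + ∂ = 1 - b` shows that `f` is constant, which gives (B2).
-/

lemma eval_sb {n : ℕ} (p : P2) (u v : MvPolynomial (Fin n) ℂ) (x : Fin n → ℂ) :
    eval x (sb p u v) = eval ![eval x u, eval x v] p := by
  rw [sb, aeval_def, MvPolynomial.algebraMap_eq, ← eval_assoc]
  congr 2
  funext i
  fin_cases i <;> rfl

namespace MvPolynomial

variable {K : Type*} [CommRing K] [IsDomain K] [Infinite K]

theorem funext_fin_two {p q : MvPolynomial (Fin 2) K}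
    (h : ∀ l d, eval ![l, d] p = eval ![l, d] q) : p = q :=
  funext fun x => by rw [← FinVec.etaExpand_eq x]; exact h (x 0) (x 1)

theorem eq_C_of_forall_eval_eq {p : MvPolynomial (Fin 2) K} {e : K}
    (h : ∀ l d, eval ![l, d] p = e) : p = C e :=
  funext_fin_two fun l d => by rw [h, eval_C]

theorem eq_one_of_forall_mul_eval_eq_mul_eval_add {g : MvPolynomial (Fin 2) K} {a b : K}
    (hg0 : g ≠ 0) (hg : ∀ l d, eval ![l, d] g = eval ![0, d] g)
    (h : ∀ l d, (a * l + d + b) * eval ![0, d] g = (l + d + b) * eval ![0, l + d] g) :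
    a = 1 := by
  have hvanish : g * (C (a - 1) * (X 1 + C b)) = 0 :=
    funext_fin_two fun l d => by
      simp only [map_mul, map_add, eval_C, eval_X, map_zero, Matrix.cons_val_one,
        Matrix.cons_val_zero, hg l d]
      linear_combination -h (-d - b) d
  have hlin := congrArg (eval ![0, 1 - b]) ((mul_eq_zero.1 hvanish).resolve_left hg0)
  simp only [map_mul, map_add, map_zero, eval_C, eval_X, Matrix.cons_val_one,
    Matrix.cons_val_zero] at hlin
  linear_combination hlin

end MvPolynomial

namespace SatS

variable {a b c : ℂ} {g1 h1 k1 k2 : P2}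

theorem b_mul_eval_h1 (hS : SatS a b c g1 (pa' + C a * lm' + C (b + c)) h1 (C c) k1 k2)
    (m d : ℂ) : b * eval ![m, d] h1 = c * eval ![0, d] g1 := by
  obtain ⟨e1, -⟩ := hS
  have h := congrArg (eval ![0, m, d]) e1
  simp only [eval_sb, lm, mu, pa, map_add, map_sub, map_mul, eval_X, eval_C, Fin.isValue,
    Matrix.cons_val_zero, Matrix.cons_val_one, Matrix.cons_val, mul_zero, zero_add, add_zero,
    zero_sub] at h
  linear_combination h

theorem b_mul_eval_g1 (hS : SatS a b c g1 (pa' + C a * lm' + C (b + c)) h1 (C c) k1 k2)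
    (l d : ℂ) : b * eval ![l, d] g1 = c * eval ![0, d] g1 := by
  have hh := hS.b_mul_eval_h1 (-l - d) d
  obtain ⟨-, -, -, -, -, -, -, -, -, -, e11, -⟩ := hS
  have h := congrArg (eval ![l, d]) e11
  simp only [eval_sb, lm', pa', map_sub, map_neg, eval_X, Fin.isValue, Matrix.cons_val_zero,
    Matrix.cons_val_one] at h
  rwa [h]

theorem b_mul_eval_k2 (hS : SatS a b c g1 (pa' + C a * lm' + C (b + c)) h1 (C c) k1 k2)
    (m d : ℂ) : b * eval ![m, d] k2 = -(c * eval ![0, m + d] g1) := by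
  obtain ⟨-, -, -, -, -, e6, -⟩ := hS
  have h := congrArg (eval ![0, m, d]) e6
  simp only [eval_sb, lm, mu, pa, lm', pa', map_add, map_sub, map_mul, eval_X, eval_C, Fin.isValue,
    Matrix.cons_val_zero, Matrix.cons_val_one, Matrix.cons_val, mul_zero, zero_add, add_zero,
    zero_sub] at h
  linear_combination h

theorem two_mul_b_mul_eval_k1 (hS : SatS a b c g1 (pa' + C a * lm' + C (b + c)) h1 (C c) k1 k2)
    (m d : ℂ) :
    2 * b * eval ![m, d] k1 =
      eval ![m, d] k2 * eval ![0, d] g1 - eval ![0, m + d] g1 * eval ![m, d] h1 := by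
  obtain ⟨-, -, -, -, e5, -⟩ := hS
  have h := congrArg (eval ![0, m, d]) e5
  simp only [eval_sb, lm, mu, pa, lm', pa', map_add, map_sub, map_mul, eval_X, eval_C, Fin.isValue,
    Matrix.cons_val_zero, Matrix.cons_val_one, Matrix.cons_val, mul_zero, zero_add, add_zero,
    zero_sub] at h
  linear_combination h

theorem e1_at_mu_zero (hS : SatS a b c g1 (pa' + C a * lm' + C (b + c)) h1 (C c) k1 k2)
    (l d : ℂ) :
    ((a - 1) * l + b) * eval ![l, d] h1 =
      eval ![0, l + d] h1 * (d + l + c) + c * eval ![l, d] g1 - (d + l + c) * eval ![0, d] h1 := by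
  obtain ⟨e1, -⟩ := hS
  have h := congrArg (eval ![l, 0, d]) e1
  simp only [eval_sb, lm, mu, pa, map_add, map_sub, map_mul, eval_X, eval_C, Fin.isValue,
    Matrix.cons_val_zero, Matrix.cons_val_one, Matrix.cons_val, add_zero, sub_zero] at h
  linear_combination h

theorem eq_zero_of_forall_eval_g1_eq_zero
    (hS : SatS a b c g1 (pa' + C a * lm' + C (b + c)) h1 (C c) k1 k2) (hb : b ≠ 0)
    (h0 : ∀ d, eval ![0, d] g1 = 0) :
    g1 = 0 ∧ h1 = 0 ∧ k1 = 0 ∧ k2 = 0 := by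
  have hg (l d : ℂ) : eval ![l, d] g1 = 0 :=
    mul_left_cancel₀ hb (by linear_combination hS.b_mul_eval_g1 l d + c * h0 d)
  have hh (m d : ℂ) : eval ![m, d] h1 = 0 :=
    mul_left_cancel₀ hb (by linear_combination hS.b_mul_eval_h1 m d + c * h0 d)
  have hk2 (m d : ℂ) : eval ![m, d] k2 = 0 :=
    mul_left_cancel₀ hb (by linear_combination hS.b_mul_eval_k2 m d - c * h0 (m + d))
  have hk1 (m d : ℂ) : eval ![m, d] k1 = 0 :=
    mul_left_cancel₀ (mul_ne_zero two_ne_zero hb) (by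
      linear_combination hS.two_mul_b_mul_eval_k1 m d + eval ![m, d] k2 * h0 d
        - eval ![m, d] h1 * h0 (m + d))
  refine ⟨?_, ?_, ?_, ?_⟩ <;> exact funext_fin_two fun l d => by simp [*]

theorem eq_const_of_eval_g1_ne_zero
    (hS : SatS a b c g1 (pa' + C a * lm' + C (b + c)) h1 (C c) k1 k2) (hb : b ≠ 0)
    {d₀ : ℂ} (hd₀ : eval ![0, d₀] g1 ≠ 0) :
    a = 1 ∧ c = b ∧
      ∃ e : ℂ, e ≠ 0 ∧ g1 = C e ∧ h1 = C e ∧ k1 = C (-(e ^ 2) / b) ∧ k2 = C (-e) := by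
  obtain rfl : c = b := (mul_right_cancel₀ hd₀ (hS.b_mul_eval_g1 0 d₀)).symm
  have hg (l d : ℂ) : eval ![l, d] g1 = eval ![0, d] g1 :=
    mul_left_cancel₀ hb (hS.b_mul_eval_g1 l d)
  have hh (m d : ℂ) : eval ![m, d] h1 = eval ![0, d] g1 :=
    mul_left_cancel₀ hb (hS.b_mul_eval_h1 m d)
  have hfe (l d : ℂ) :
      (a * l + d + c) * eval ![0, d] g1 = (l + d + c) * eval ![0, l + d] g1 := by
    have h := hS.e1_at_mu_zero l d
    rw [hh, hh, hh, hg l d] at h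
    linear_combination h
  obtain rfl : a = 1 :=
    eq_one_of_forall_mul_eval_eq_mul_eval_add (fun h => hd₀ (by rw [h, map_zero])) hg hfe
  set e := eval ![0, 1 - c] g1
  have hconst (d : ℂ) : eval ![0, d] g1 = e := by
    have h := hfe (1 - c - d) d
    rw [show 1 - c - d + d = 1 - c by ring] at h
    linear_combination h
  have hk2 (m d : ℂ) : eval ![m, d] k2 = -e :=
    mul_left_cancel₀ hb (by linear_combination hS.b_mul_eval_k2 m d - c * hconst (m + d))
  have hk1 (m d : ℂ) : eval ![m, d] k1 = -(e ^ 2) / c := by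
    have h := hS.two_mul_b_mul_eval_k1 m d
    rw [hk2, hh, hconst, hconst] at h
    rw [eq_div_iff hb]
    linear_combination h / 2
  exact ⟨rfl, rfl, e, hconst d₀ ▸ hd₀,
    eq_C_of_forall_eval_eq fun l d => (hg l d).trans (hconst d),
    eq_C_of_forall_eval_eq fun m d => (hh m d).trans (hconst d),
    eq_C_of_forall_eval_eq hk1, eq_C_of_forall_eval_eq hk2⟩

end SatS

theorem stmt4_general (a b c : ℂ) (hb : b ≠ 0) (g1 g2 h1 h2 k1 k2 : P2)
    (hS : SatS a b c g1 g2 h1 h2 k1 k2)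
    (hg2 : g2 = pa' + C a * lm' + C (b + c)) (hh2 : h2 = C c) :
    -- (B1)
    (g1 = 0 ∧ h1 = 0 ∧ k1 = 0 ∧ k2 = 0) ∨
    -- (B2)
    (a = 1 ∧ c = b ∧
      ∃ d : ℂ, d ≠ 0 ∧ g1 = C d ∧ h1 = C d ∧ k1 = C (-(d ^ 2) / b) ∧ k2 = C (-d)) := by
  subst hg2 hh2
  by_cases h0 : ∀ d, eval ![0, d] g1 = 0
  · exact Or.inl (hS.eq_zero_of_forall_eval_g1_eq_zero hb h0)
  · obtain ⟨d₀, hd₀⟩ := not_forall.1 h0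
    exact Or.inr (hS.eq_const_of_eval_g1_ne_zero hb hd₀)

/-- Lemma 3.3: classification in Case (B) when `b ≠ 0` (and `c ≠ 0`),
i.e. when `g₂ = ∂ + aλ + b + c` and `h₂ = c`. -/
theorem stmt4 (a b c : ℂ) (hb : b ≠ 0) (hc : c ≠ 0) (g1 g2 h1 h2 k1 k2 : P2)
    (hS : SatS a b c g1 g2 h1 h2 k1 k2)
    (hg2 : g2 = pa' + C a * lm' + C (b + c)) (hh2 : h2 = C c) :
    -- (B1)
    (g1 = 0 ∧ h1 = 0 ∧ k1 = 0 ∧ k2 = 0) ∨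
    -- (B2)
    (a = 1 ∧ c = b ∧
      ∃ d : ℂ, d ≠ 0 ∧ g1 = C d ∧ h1 = C d ∧ k1 = C (-(d ^ 2) / b) ∧ k2 = C (-d)) :=
  stmt4_general a b c hb g1 g2 h1 h2 k1 k2 hS hg2 hh2

end
end

section
/- Let a, b ∈ ℂ and let A be the free ℂ-vector space with basis {L_m : m ∈ ℤ} ∪ {W_m : m ∈ ℤ}. The ℂ-bilinear bracket on A defined on basis elements by [L_m,L_n] = (m−n)L_{m+n}, [L_m,W_n] = ((m+1)(a−1)−(n+1))W_{m+n} + bW_{m+n+1}, [W_n,L_m] = −[L_m,W_n], and [W_m,W_n] = 0 makes A into a Lie algebra, i.e., the bracket is alternating and satisfies the Jacobi identity. -/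
/-!
Both identities are multilinear, so they only need to be checked on the basis `{L m} ∪ {W n}`.
Antisymmetry on basis vectors gives `B = -B.flip`, hence `B x x = 0` because `A` is torsion-free.
The Jacobi identity on basis triples is a polynomial identity in `m, n, p, a, b`; it is trivial
as soon as two of the three vectors are `W`'s, since `[W, W] = 0` and `[L, W]` lies in the span
of the `W`'s.
-/

noncomputable section

/-- `A` is the free `ℂ`-vector space with basis `{L m : m ∈ ℤ} ∪ {W m : m ∈ ℤ}`. -/
abbrev A : Type := (ℤ ⊕ ℤ) →₀ ℂ

/-- The basis vector `L m`. -/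
def L (m : ℤ) : A := Finsupp.single (Sum.inl m) 1

/-- The basis vector `W m`. -/
def W (m : ℤ) : A := Finsupp.single (Sum.inr m) 1

namespace LinearMap

section Jacobi

variable {ι R M : Type*} [CommSemiring R] [AddCommMonoid M] [Module R M] (b : Module.Basis ι R M)
  {B : M →ₗ[R] M →ₗ[R] M}

theorem jacobi_of_basis
    (h : ∀ i j k, B (b i) (B (b j) (b k)) = B (B (b i) (b j)) (b k) + B (b j) (B (b i) (b k)))
    (x y z : M) : B x (B y z) = B (B x y) z + B y (B x z) := by
  -- `(x, y) ↦ B x ∘ₗ B y` and `(x, y) ↦ B (B x y)` as bilinear maps into `Module.End R M`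
  have key : (llcomp R M M M ∘ₗ B).compl₂ B =
      B.compr₂ B + ((llcomp R M M M ∘ₗ B).compl₂ B).flip :=
    ext_basis b b fun i j => b.ext fun k => h i j k
  exact congr($key x y z)

end Jacobi

section Alternating

variable {ι R M : Type*} [CommRing R] [AddCommGroup M] [Module R M] (b : Module.Basis ι R M)
  {B : M →ₗ[R] M →ₗ[R] M}

theorem isAlt_of_basis [IsAddTorsionFree M] (h : ∀ i j, B (b i) (b j) = -B (b j) (b i)) :
    B.IsAlt := fun x =>
  self_eq_neg.mp congr($(ext_basis (B' := -B.flip) b b h) x x)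

end Alternating

end LinearMap

theorem coe_basisSingleOne_eq_elim :
    ⇑(Finsupp.basisSingleOne : Module.Basis (ℤ ⊕ ℤ) ℂ A) = Sum.elim L W := by
  ext (m | m) : 1 <;> rfl

section Bracket

variable {a b : ℂ} {B : A →ₗ[ℂ] A →ₗ[ℂ] A}
  (hBLL : ∀ m n : ℤ, B (L m) (L n) = ((m : ℂ) - (n : ℂ)) • L (m + n))
  (hBLW : ∀ m n : ℤ, B (L m) (W n) =
    (((m : ℂ) + 1) * (a - 1) - ((n : ℂ) + 1)) • W (m + n) + b • W (m + n + 1))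
  (hBWL : ∀ m n : ℤ, B (W n) (L m) = -B (L m) (W n))
  (hBWW : ∀ m n : ℤ, B (W m) (W n) = 0)

include hBLL hBWL hBWW in
theorem bracket_elim_antisymm (i j : ℤ ⊕ ℤ) :
    B (Sum.elim L W i) (Sum.elim L W j) = -B (Sum.elim L W j) (Sum.elim L W i) := by
  rcases i with m | m <;> rcases j with n | n <;> simp only [Sum.elim_inl, Sum.elim_inr]
  · rw [hBLL, hBLL, add_comm n m, ← neg_smul, neg_sub]
  · rw [hBWL, neg_neg]
  · rw [hBWL]
  · rw [hBWW, hBWW, neg_zero]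

include hBLL hBLW hBWL hBWW in
theorem jacobi_elim (i j k : ℤ ⊕ ℤ) :
    B (Sum.elim L W i) (B (Sum.elim L W j) (Sum.elim L W k)) =
      B (B (Sum.elim L W i) (Sum.elim L W j)) (Sum.elim L W k) +
        B (Sum.elim L W j) (B (Sum.elim L W i) (Sum.elim L W k)) := by
  rcases i with m | m <;> rcases j with n | n <;> rcases k with p | p <;>
    simp only [Sum.elim_inl, Sum.elim_inr, hBLL, hBLW, hBWL, hBWW, map_add, map_neg, map_smul,
      map_zero, LinearMap.add_apply, LinearMap.neg_apply, LinearMap.smul_apply,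
      LinearMap.zero_apply, smul_add, smul_neg, smul_zero, smul_smul, add_zero, neg_zero]
  all_goals push_cast; ring_nf; module

end Bracket

/-- the ℂ-bilinear bracket defined on basis elements by
`[L m, L n] = (m−n)L (m+n)`, `[L m, W n] = ((m+1)(a−1)−(n+1))W (m+n) + b W (m+n+1)`,
`[W n, L m] = −[L m, W n]`, `[W m, W n] = 0` makes `A` into a Lie algebra: it is
alternating and satisfies the Jacobi identity. -/
theorem stmt11 (a b : ℂ)
    (B : A →ₗ[ℂ] A →ₗ[ℂ] A)
    (hBLL : ∀ m n : ℤ, B (L m) (L n) = ((m : ℂ) - (n : ℂ)) • L (m + n))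
    (hBLW : ∀ m n : ℤ, B (L m) (W n) =
      (((m : ℂ) + 1) * (a - 1) - ((n : ℂ) + 1)) • W (m + n) + b • W (m + n + 1))
    (hBWL : ∀ m n : ℤ, B (W n) (L m) = -B (L m) (W n))
    (hBWW : ∀ m n : ℤ, B (W m) (W n) = 0) :
    -- the bracket is alternating:
    (∀ x : A, B x x = 0) ∧
    -- and satisfies the Jacobi identity:
    (∀ x y z : A, B x (B y z) = B (B x y) z + B y (B x z)) := by
  refine ⟨LinearMap.isAlt_of_basis Finsupp.basisSingleOne ?_,
    LinearMap.jacobi_of_basis Finsupp.basisSingleOne ?_⟩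
  · rw [coe_basisSingleOne_eq_elim]; exact bracket_elim_antisymm hBLL hBWL hBWW
  · rw [coe_basisSingleOne_eq_elim]; exact jacobi_elim hBLL hBLW hBWL hBWW

end
end

section
/- Let a, b, c ∈ ℂ. The ℂ-bilinear product ∘ on A defined on basis elements by L_m∘L_n = cL_{m+n+1} − (n+1)L_{m+n}, L_m∘W_n = ((a−1)(m+1)−(n+1))W_{m+n} + bW_{m+n+1}, W_m∘L_n = 0 and W_m∘W_n = 0 is left-symmetric, and it is a compatible left-symmetric algebraic structure on the Lie algebra Coeff(W(a,b)). -/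
noncomputable section

namespace LinearMap

variable {R V ι : Type*} [CommRing R] [AddCommGroup V] [Module R V]

def associator (μ : V →ₗ[R] V →ₗ[R] V) : V →ₗ[R] V →ₗ[R] V →ₗ[R] V :=
  (llcomp R V V (V →ₗ[R] V) μ).comp μ - ((llcomp R V V V).comp μ).compl₂ μ

@[simp]
theorem associator_apply (μ : V →ₗ[R] V →ₗ[R] V) (x y z : V) :
    μ.associator x y z = μ (μ x y) z - μ x (μ y z) :=
  rfl

theorem associator_swap_of_basis (b : Module.Basis ι R V) (μ : V →ₗ[R] V →ₗ[R] V)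
    (h : ∀ i j k, μ.associator (b i) (b j) (b k) = μ.associator (b j) (b i) (b k))
    (x y z : V) : μ.associator x y z = μ.associator y x z := by
  have : μ.associator.flip = μ.associator :=
    b.ext fun i ↦ b.ext fun j ↦ b.ext fun k ↦ h j i k
  exact LinearMap.congr_fun (LinearMap.congr_fun (LinearMap.congr_fun this y) x) z

theorem sub_flip_eq_of_basis (b : Module.Basis ι R V) (μ β : V →ₗ[R] V →ₗ[R] V)
    (h : ∀ i j, μ (b i) (b j) - μ (b j) (b i) = β (b i) (b j)) (x y : V) :
    μ x y - μ y x = β x y := by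
  have : μ - μ.flip = β := ext_basis b b h
  exact LinearMap.congr_fun (LinearMap.congr_fun this x) y

end LinearMap

theorem basisSingleOne_inl (m : ℤ) : Finsupp.basisSingleOne (Sum.inl m) = L m := by
  simp [L]

theorem basisSingleOne_inr (m : ℤ) : Finsupp.basisSingleOne (Sum.inr m) = W m := by
  simp [W]

section Product

variable {a b c : ℂ} {M : A →ₗ[ℂ] A →ₗ[ℂ] A}

theorem apply_W_eq_zero (hWL : ∀ m n : ℤ, M (W m) (L n) = 0)
    (hWW : ∀ m n : ℤ, M (W m) (W n) = 0) (m : ℤ) : M (W m) = 0 :=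
  Finsupp.basisSingleOne.ext <| by
    rintro (n | n) <;> simp [basisSingleOne_inl, basisSingleOne_inr, hWL, hWW]

theorem associator_W_left (hWL : ∀ m n : ℤ, M (W m) (L n) = 0)
    (hWW : ∀ m n : ℤ, M (W m) (W n) = 0) (m : ℤ) (y z : A) : M.associator (W m) y z = 0 := by
  simp [apply_W_eq_zero hWL hWW]

theorem associator_L_W (hLW : ∀ m n : ℤ, M (L m) (W n) =
      ((a - 1) * ((m : ℂ) + 1) - ((n : ℂ) + 1)) • W (m + n) + b • W (m + n + 1))
    (hWL : ∀ m n : ℤ, M (W m) (L n) = 0) (hWW : ∀ m n : ℤ, M (W m) (W n) = 0)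
    (m n : ℤ) (z : A) : M.associator (L m) (W n) z = 0 := by
  simp [hLW, apply_W_eq_zero hWL hWW]

theorem associator_L_L_L
    (hLL : ∀ m n : ℤ, M (L m) (L n) = c • L (m + n + 1) - ((n : ℂ) + 1) • L (m + n))
    (m n p : ℤ) :
    M.associator (L m) (L n) (L p) =
      ((p : ℂ) + 1) • (c • L (m + n + p + 1) - (p : ℂ) • L (m + n + p)) := by
  simp only [LinearMap.associator_apply, hLL, map_sub, map_smul, LinearMap.sub_apply,
    LinearMap.smul_apply]
  ring_nf
  module

theorem associator_L_L_W
    (hLL : ∀ m n : ℤ, M (L m) (L n) = c • L (m + n + 1) - ((n : ℂ) + 1) • L (m + n))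
    (hLW : ∀ m n : ℤ, M (L m) (W n) =
      ((a - 1) * ((m : ℂ) + 1) - ((n : ℂ) + 1)) • W (m + n) + b • W (m + n + 1))
    (m n p : ℤ) :
    M.associator (L m) (L n) (W p) =
      -(a * (a - 1) * ((m : ℂ) + 1) * ((n : ℂ) + 1) - (a - 1) * ((p : ℂ) + 1) * (m + n + 2)
          + p * (p + 1)) • W (m + n + p)
        + ((c - b) * (a - 1) * ((m : ℂ) + n + 2) + (2 * b - c) * ((p : ℂ) + 1))
          • W (m + n + p + 1)
        + (b * (c - b)) • W (m + n + p + 2) := by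
  simp only [LinearMap.associator_apply, hLL, hLW, map_add, map_sub, map_smul,
    LinearMap.sub_apply, LinearMap.smul_apply]
  ring_nf
  module

end Product

/-- Corollary 3.8 (1). -/
theorem stmt12 (a b c : ℂ)
    -- `M` is the ℂ-bilinear product `∘` given on basis elements by:
    (M : A →ₗ[ℂ] A →ₗ[ℂ] A)
    (hLL : ∀ m n : ℤ, M (L m) (L n) = c • L (m + n + 1) - ((n : ℂ) + 1) • L (m + n))
    (hLW : ∀ m n : ℤ, M (L m) (W n) =
      ((a - 1) * ((m : ℂ) + 1) - ((n : ℂ) + 1)) • W (m + n) + b • W (m + n + 1))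
    (hWL : ∀ m n : ℤ, M (W m) (L n) = 0)
    (hWW : ∀ m n : ℤ, M (W m) (W n) = 0)
    -- `B` is the ℂ-bilinear Lie bracket of Coeff(W(a,b)) on basis elements:
    (B : A →ₗ[ℂ] A →ₗ[ℂ] A)
    (hBLL : ∀ m n : ℤ, B (L m) (L n) = ((m : ℂ) - (n : ℂ)) • L (m + n))
    (hBLW : ∀ m n : ℤ, B (L m) (W n) =
      (((m : ℂ) + 1) * (a - 1) - ((n : ℂ) + 1)) • W (m + n)
        + b • W (m + n + 1))
    (hBWL : ∀ m n : ℤ, B (W n) (L m) = -B (L m) (W n))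
    (hBWW : ∀ m n : ℤ, B (W m) (W n) = 0) :
    -- `∘ = M` is left-symmetric:
    ((∀ x y z : A, M (M x y) z - M x (M y z) = M (M y x) z - M y (M x z)) ∧
    -- and compatible with the Lie bracket:
    (∀ x y : A, M x y - M y x = B x y)) := by
  refine ⟨LinearMap.associator_swap_of_basis Finsupp.basisSingleOne M ?_,
    LinearMap.sub_flip_eq_of_basis Finsupp.basisSingleOne M B ?_⟩
  · rintro (m | m) (n | n) (p | p) <;>
      simp only [basisSingleOne_inl, basisSingleOne_inr, associator_W_left hWL hWW,
        associator_L_W hLW hWL hWW]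
    · rw [associator_L_L_L hLL, associator_L_L_L hLL, add_comm n m]
    · rw [associator_L_L_W hLL hLW, associator_L_L_W hLL hLW, add_comm n m]
      ring_nf
  · rintro (m | m) (n | n) <;>
      simp only [basisSingleOne_inl, basisSingleOne_inr, hLL, hLW, hWL, hWW, hBLL, hBLW, hBWL,
        hBWW, sub_zero, zero_sub]
    · rw [add_comm n m]
      module
    all_goals module

end
end
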